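/- arXiv:2107.01720 — 6 statements merged into one kernel-verified Lean document; each statement's English description precedes it below -/
import Mathlib

section
/- For every positive integer n and real s > 0, the sum over k from 1 to n of (1/k)·Γ(n+1)Γ(n−k+2s)/(Γ(n−k+1)Γ(n+2s)) equals ψ(2s+n) − ψ(2s), where ψ is the digamma function. -/
open Finset

/-- The digamma function: logarithmic derivative of the Gamma function. -/
noncomputable def digamma (x : ℝ) : ℝ := deriv (fun y => Real.log (Real.Gamma y)) x

/-!
Write `a = 2s` and `T n k` for the `k`-th summand. Using only `Γ(x + 1) = x Γ(x)`, the difference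
`T (n + 1) k - T n k` is `k (a - 1)` times a Gamma ratio; the factor `k` cancels the `1/k`, and
what remains is `Γ(n+1)/Γ(n+1+a)` times a difference `v(n-k+1) - v(n-k)` with
`v(x) = Γ(x+a)/Γ(x+1)`. Summing over `k` telescopes, and the boundary term `-v(0)` cancels the new
summand `T (n + 1) (n + 1)`, so the sum grows by `1/(n + a)` from `n` to `n + 1`. The functional
equation `ψ(x + 1) = ψ(x) + 1/x` gives the same increments on the right-hand side.
-/

open Real Filter Topology

theorem digamma_eq_deriv_Gamma_div {x : ℝ} (hx : ∀ m : ℕ, x ≠ -m) :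
    digamma x = deriv Gamma x / Gamma x :=
  deriv.log (differentiableAt_Gamma hx) (Gamma_ne_zero hx)

theorem digamma_add_one {x : ℝ} (hx : ∀ m : ℕ, x ≠ -m) :
    digamma (x + 1) = digamma x + 1 / x := by
  have hx0 : x ≠ 0 := by simpa using hx 0
  have hx1 : ∀ m : ℕ, x + 1 ≠ -m := fun m h => hx (m + 1) (by push_cast; linarith)
  have hderiv : deriv Gamma (x + 1) = Gamma x + x * deriv Gamma x := by
    have hshift : (fun y => Gamma (y + 1)) =ᶠ[𝓝 x] fun y => y * Gamma y := by
      filter_upwards [eventually_ne_nhds hx0] with y hy using Gamma_add_one hy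
    rw [← deriv_comp_add_const, hshift.deriv_eq,
      deriv_fun_mul differentiableAt_fun_id (differentiableAt_Gamma hx)]
    simp
  rw [digamma_eq_deriv_Gamma_div hx1, digamma_eq_deriv_Gamma_div hx, hderiv, Gamma_add_one hx0]
  field_simp [Gamma_ne_zero hx]
  ring

theorem digamma_add_nat_sub {x : ℝ} (hx : ∀ m : ℕ, x ≠ -m) (n : ℕ) :
    digamma (x + n) - digamma x = ∑ j ∈ range n, 1 / (x + j) := by
  induction n with
  | zero => simp
  | succ n ih =>
    have hxn : ∀ m : ℕ, x + n ≠ -m := fun m h => hx (m + n) (by push_cast; linarith)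
    rw [Nat.cast_succ, ← add_assoc, digamma_add_one hxn, sum_range_succ, ← ih]
    ring

noncomputable section

/-- `gammaHarmonicTerm (2 * s) n k` is `φ_s(k, n)` and `gammaHarmonic (2 * s) n` is `h_s(n)`. -/
def gammaHarmonicTerm (a : ℝ) (n k : ℕ) : ℝ :=
  (1 / (k : ℝ)) * (Gamma ((n : ℝ) + 1) * Gamma ((n : ℝ) - (k : ℝ) + a)) /
    (Gamma ((n : ℝ) - (k : ℝ) + 1) * Gamma ((n : ℝ) + a))

def gammaHarmonic (a : ℝ) (n : ℕ) : ℝ :=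
  ∑ k ∈ Icc 1 n, gammaHarmonicTerm a n k

def gammaRatio (a x : ℝ) : ℝ := Gamma (x + a) / Gamma (x + 1)

end

variable {a : ℝ}

theorem gammaHarmonicTerm_succ_sub (ha : 0 < a) {n k : ℕ} (hk : 1 ≤ k) (hkn : k ≤ n) :
    gammaHarmonicTerm a (n + 1) k - gammaHarmonicTerm a n k =
      Gamma (n + 1) / Gamma (n + 1 + a) *
        (gammaRatio a (n - k + 1) - gammaRatio a (n - k)) := by
  have hk0 : (0 : ℝ) < k := by exact_mod_cast hk
  have hx : (0 : ℝ) ≤ n - k := sub_nonneg.mpr (by exact_mod_cast hkn)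
  have hn : (0 : ℝ) < n + 1 := by linarith
  have hΓn : Gamma ((n : ℝ) + 1 + 1) = (n + 1) * Gamma (n + 1) := Gamma_add_one hn.ne'
  have hΓna : Gamma ((n : ℝ) + 1 + a) = (n + a) * Gamma (n + a) := by
    rw [add_right_comm, Gamma_add_one (by positivity)]
  have hΓx : Gamma ((n : ℝ) - k + 1 + 1) = (n - k + 1) * Gamma (n - k + 1) :=
    Gamma_add_one (by positivity)
  have hΓxa : Gamma ((n : ℝ) - k + 1 + a) = (n - k + a) * Gamma (n - k + a) := by
    rw [add_right_comm, Gamma_add_one (by positivity)]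
  unfold gammaHarmonicTerm gammaRatio
  push_cast
  rw [add_sub_right_comm (n : ℝ) 1 k, hΓn, hΓna, hΓx, hΓxa]
  have hΓx_pos := Gamma_pos_of_pos (show 0 < (n : ℝ) - k + 1 by positivity)
  have hΓxa_pos := Gamma_pos_of_pos (show 0 < (n : ℝ) - k + a by positivity)
  have hΓna_pos := Gamma_pos_of_pos (show 0 < (n : ℝ) + a by positivity)
  have hΓn_pos := Gamma_pos_of_pos hn
  field_simp
  ring

theorem sum_gammaRatio_sub (n : ℕ) :
    ∑ k ∈ Icc 1 n, (gammaRatio a (n - k + 1) - gammaRatio a (n - k)) =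
      gammaRatio a n - gammaRatio a 0 := by
  rcases Nat.eq_zero_or_pos n with rfl | hn
  · simp
  have := sum_Icc_sub (m := 1) (n := n) hn (fun k => - gammaRatio a ((n : ℝ) + 1 - k))
  push_cast at this
  convert this using 1
  · refine sum_congr rfl fun k _ => ?_
    ring_nf
  · ring_nf

theorem gammaHarmonic_succ (ha : 0 < a) (n : ℕ) :
    gammaHarmonic a (n + 1) = gammaHarmonic a n + 1 / (n + a) := by
  have hΓn : Gamma ((n : ℝ) + 1 + 1) = (n + 1) * Gamma (n + 1) := Gamma_add_one (by positivity)
  have hΓna : Gamma ((n : ℝ) + 1 + a) = (n + a) * Gamma (n + a) := by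
    rw [add_right_comm, Gamma_add_one (by positivity)]
  have hΓna_pos := Gamma_pos_of_pos (show 0 < (n : ℝ) + a by positivity)
  have hΓn_pos := Gamma_pos_of_pos (show 0 < (n : ℝ) + 1 by positivity)
  have hold : ∑ k ∈ Icc 1 n, gammaHarmonicTerm a (n + 1) k =
      gammaHarmonic a n +
        Gamma (n + 1) / Gamma (n + 1 + a) * (gammaRatio a n - gammaRatio a 0) := by
    rw [gammaHarmonic, ← sum_gammaRatio_sub, mul_sum, ← sum_add_distrib]
    refine sum_congr rfl fun k hk => ?_
    rw [mem_Icc] at hk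
    rw [← gammaHarmonicTerm_succ_sub ha hk.1 hk.2]
    ring
  have hnew : gammaHarmonicTerm a (n + 1) (n + 1) =
      Gamma (n + 1) / Gamma (n + 1 + a) * gammaRatio a 0 := by
    unfold gammaHarmonicTerm gammaRatio
    rw [sub_self, Nat.cast_succ, hΓn, zero_add, zero_add, Gamma_one]
    field_simp
  have htop : Gamma (n + 1) / Gamma (n + 1 + a) * gammaRatio a n = 1 / (n + a) := by
    unfold gammaRatio
    rw [hΓna]
    field_simp
  rw [gammaHarmonic, sum_Icc_succ_top (by omega), hold, hnew, mul_sub, htop]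
  ring

theorem gammaHarmonic_eq_sum (ha : 0 < a) (n : ℕ) :
    gammaHarmonic a n = ∑ j ∈ range n, 1 / (a + j) := by
  induction n with
  | zero => simp [gammaHarmonic]
  | succ n ih => rw [gammaHarmonic_succ ha, ih, sum_range_succ, add_comm (n : ℝ)]

theorem stmt_0_general (n : ℕ) (s : ℝ) (hs : 0 < s) :
    ∑ k ∈ Finset.Icc 1 n,
      (1 / (k : ℝ)) * (Real.Gamma ((n : ℝ) + 1) * Real.Gamma ((n : ℝ) - (k : ℝ) + 2 * s)) /
        (Real.Gamma ((n : ℝ) - (k : ℝ) + 1) * Real.Gamma ((n : ℝ) + 2 * s))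
      = digamma (2 * s + n) - digamma (2 * s) := by
  have ha : 0 < 2 * s := by positivity
  have hpole : ∀ m : ℕ, 2 * s ≠ -m := fun m h => by
    have : (0 : ℝ) ≤ m := m.cast_nonneg
    linarith
  rw [digamma_add_nat_sub hpole, ← gammaHarmonic_eq_sum ha]
  rfl

theorem stmt_0 (n : ℕ) (hn : 1 ≤ n) (s : ℝ) (hs : 0 < s) :
    ∑ k ∈ Finset.Icc 1 n,
      (1 / (k : ℝ)) * (Real.Gamma ((n : ℝ) + 1) * Real.Gamma ((n : ℝ) - (k : ℝ) + 2 * s)) /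
        (Real.Gamma ((n : ℝ) - (k : ℝ) + 1) * Real.Gamma ((n : ℝ) + 2 * s))
      = digamma (2 * s + n) - digamma (2 * s) :=
  stmt_0_general n s hs
end

section
/- For integers n ≥ 1, 1 ≤ k ≤ n, and real s > 0, Σ_{j=0}^{k} (−1)^{k−j} · C(n,j) · C(n−j, k−j) · h_s(n−j) = −φ_s(k,n), where h_s(m) = Σ_{i=1}^m 1/(i+2s−1) and φ_s(k,n) = (1/k)·Γ(n+1)Γ(n−k+2s)/(Γ(n−k+1)Γ(n+2s)). -/
open Finset

/-- Shifted harmonic numbers `h_s(m) = ∑_{i=1}^m 1/(i+2s-1)`. -/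
noncomputable def hShift (s : ℝ) (m : ℕ) : ℝ := ∑ i ∈ Finset.Icc 1 m, 1 / ((i : ℝ) + 2 * s - 1)

/-- The rates `φ_s(k,n) = (1/k)·Γ(n+1)Γ(n−k+2s)/(Γ(n−k+1)Γ(n+2s))`. -/
noncomputable def phiRate (s : ℝ) (k n : ℕ) : ℝ :=
  (1 / (k : ℝ)) * (Real.Gamma ((n : ℝ) + 1) * Real.Gamma ((n : ℝ) - (k : ℝ) + 2 * s)) /
    (Real.Gamma ((n : ℝ) - (k : ℝ) + 1) * Real.Gamma ((n : ℝ) + 2 * s))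

/-!
Since `C(n,j) C(n-j,k-j) = C(n,k) C(k,j)`, the sum is `(-1)^k C(n,k)` times the `k`-th forward
difference of `h_s` at `n - k`. The first difference of `h_s` is `m ↦ 1/(m + 2s)`, and the `r`-th
difference of `x ↦ 1/x` is `(-1)^r r! / (x (x+1) ⋯ (x+r))`. With `r = k - 1` and `x = n - k + 2s`
that rising factorial is `Γ(n + 2s) / Γ(n - k + 2s)`, which turns the result into `-φ_s(k,n)`.
-/

open Polynomial fwdDiff
open scoped Nat

lemma Real.Gamma_add_nat_eq_ascPochhammer_eval_mul {x : ℝ} (hx : ∀ m : ℕ, x + m ≠ 0) (r : ℕ) :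
    Real.Gamma (x + r) = (ascPochhammer ℝ r).eval x * Real.Gamma x := by
  induction r with
  | zero => simp
  | succ r ih =>
    rw [Nat.cast_succ, ← add_assoc, Real.Gamma_add_one (hx r), ih, ascPochhammer_succ_eval]
    ring

lemma fwdDiff_iter_inv {K : Type*} [Field K] (r : ℕ) {x : K}
    (hx : (ascPochhammer K (r + 1)).eval x ≠ 0) :
    Δ_[1] ^[r] (fun y : K => y⁻¹) x = (-1) ^ r * r ! / (ascPochhammer K (r + 1)).eval x := by
  induction r generalizing x with
  | zero => simp [ascPochhammer_one]
  | succ r ih =>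
    have hleft : (ascPochhammer K (r + 1 + 1)).eval x
        = x * (ascPochhammer K (r + 1)).eval (x + 1) := by
      simp [ascPochhammer_succ_left, eval_comp]
    have hright : (ascPochhammer K (r + 1 + 1)).eval x
        = (ascPochhammer K (r + 1)).eval x * (x + (r + 1)) := by
      rw [ascPochhammer_succ_eval]; push_cast; ring
    have h0 : (ascPochhammer K (r + 1)).eval x ≠ 0 := left_ne_zero_of_mul (hright ▸ hx)
    have h1 : (ascPochhammer K (r + 1)).eval (x + 1) ≠ 0 := right_ne_zero_of_mul (hleft ▸ hx)
    rw [Function.iterate_succ_apply', fwdDiff, ih h1, ih h0, div_sub_div _ _ h1 h0,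
      div_eq_div_iff (mul_ne_zero h1 h0) hx, Nat.factorial_succ]
    push_cast
    linear_combination (-1) ^ r * (r ! : K) * ((ascPochhammer K (r + 1)).eval x * hleft
      - (ascPochhammer K (r + 1)).eval (x + 1) * hright)

lemma fwdDiff_iter_natCast_add {R G : Type*} [AddCommMonoidWithOne R] [AddCommGroup G]
    (f : R → G) (a : R) (r m : ℕ) :
    Δ_[1] ^[r] (fun n : ℕ => f (n + a)) m = Δ_[1] ^[r] f (m + a) := by
  simp [fwdDiff_iter_eq_sum_shift, add_right_comm]

lemma sum_choose_mul_apply_sub_eq_fwdDiff_iter {R : Type*} [CommRing R] (f : ℕ → R) {k n : ℕ}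
    (hkn : k ≤ n) :
    ∑ j ∈ range (k + 1), (-1 : R) ^ (k - j) * k.choose j * f (n - j)
      = (-1) ^ k * Δ_[1] ^[k] f (n - k) := by
  rw [fwdDiff_iter_eq_sum_shift, mul_sum, ← sum_range_reflect]
  refine sum_congr rfl fun j hj => ?_
  have hjk : j ≤ k := Nat.lt_succ_iff.mp (mem_range.mp hj)
  have hsign : (-1 : R) ^ (k - (k + 1 - 1 - j)) = (-1) ^ k * (-1) ^ (k - j) := by
    rw [← pow_add, show k + (k - j) = k - (k + 1 - 1 - j) + 2 * (k - j) by omega, pow_add,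
      pow_mul, neg_one_sq, one_pow, mul_one]
  rw [hsign, show n - (k + 1 - 1 - j) = n - k + j • 1 by simp; omega,
    show k + 1 - 1 - j = k - j by omega, Nat.choose_symm hjk, zsmul_eq_mul]
  push_cast
  ring

lemma fwdDiff_hShift (s : ℝ) : Δ_[1] (hShift s) = fun m : ℕ => ((m : ℝ) + 2 * s)⁻¹ := by
  ext m
  rw [fwdDiff, hShift, hShift, sum_Icc_succ_top (by omega), add_sub_cancel_left, one_div]
  push_cast
  ring

lemma phiRate_succ_eq_choose_mul_factorial_div {s : ℝ} (hs : 0 < s) {r n : ℕ}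
    (hrn : r + 1 ≤ n) :
    phiRate s (r + 1) n = n.choose (r + 1) * r ! /
      (ascPochhammer ℝ (r + 1)).eval (((n - (r + 1) : ℕ) : ℝ) + 2 * s) := by
  obtain ⟨N, rfl⟩ : ∃ N, n = N + (r + 1) := ⟨n - (r + 1), by omega⟩
  have hx : ∀ m : ℕ, (N : ℝ) + 2 * s + m ≠ 0 := fun m => by positivity
  have hΓ := Real.Gamma_add_nat_eq_ascPochhammer_eval_mul hx (r + 1)
  have hfac := Nat.add_choose_mul_factorial_mul_factorial N (r + 1)
  have hΓpos : 0 < Real.Gamma (N + 2 * s) := Real.Gamma_pos_of_pos (by positivity)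
  have hPpos : 0 < (ascPochhammer ℝ (r + 1)).eval ((N : ℝ) + 2 * s) :=
    ascPochhammer_pos _ _ (by positivity)
  have hsub : ((N + (r + 1) : ℕ) : ℝ) - (r + 1 : ℕ) = N := by push_cast; ring
  have hadd : ((N + (r + 1) : ℕ) : ℝ) + 2 * s = N + 2 * s + (r + 1 : ℕ) := by push_cast; ring
  unfold phiRate
  rw [Nat.add_sub_cancel, hsub, hadd, hΓ, Real.Gamma_nat_eq_factorial,
    Real.Gamma_nat_eq_factorial, ← hfac, Nat.factorial_succ]
  field_simp
  push_cast
  ring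

theorem stmt_4_general (n k : ℕ) (hk1 : 1 ≤ k) (hkn : k ≤ n) (s : ℝ) (hs : 0 < s) :
    ∑ j ∈ Finset.range (k + 1),
        (-1 : ℝ) ^ (k - j) * (n.choose j : ℝ) * ((n - j).choose (k - j) : ℝ) * hShift s (n - j)
      = -phiRate s k n := by
  obtain ⟨r, rfl⟩ := Nat.exists_eq_add_of_le' hk1
  have hP : (ascPochhammer ℝ (r + 1)).eval (((n - (r + 1) : ℕ) : ℝ) + 2 * s) ≠ 0 :=
    (ascPochhammer_pos _ _ (by positivity)).ne'
  calc _ = n.choose (r + 1) * ∑ j ∈ range (r + 1 + 1),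
        (-1 : ℝ) ^ (r + 1 - j) * (r + 1).choose j * hShift s (n - j) := by
        rw [mul_sum]
        refine sum_congr rfl fun j hj => ?_
        have hchoose := Nat.choose_mul (n := n) (Nat.lt_succ_iff.mp (mem_range.mp hj))
        rw [mul_assoc _ (n.choose j : ℝ), ← Nat.cast_mul, ← hchoose]
        push_cast
        ring
    _ = n.choose (r + 1) * ((-1) ^ (r + 1) * ((-1) ^ r * r ! /
          (ascPochhammer ℝ (r + 1)).eval (((n - (r + 1) : ℕ) : ℝ) + 2 * s))) := by
        rw [sum_choose_mul_apply_sub_eq_fwdDiff_iter _ hkn, Function.iterate_succ_apply,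
          fwdDiff_hShift, fwdDiff_iter_natCast_add (fun y : ℝ => y⁻¹), fwdDiff_iter_inv r hP]
    _ = -phiRate s (r + 1) n := by
        have hsign : (-1 : ℝ) ^ (r + 1) * (-1) ^ r = -1 := by
          rw [← pow_add]
          exact Odd.neg_one_pow ⟨r, by ring⟩
        rw [phiRate_succ_eq_choose_mul_factorial_div hs hkn]
        linear_combination (n.choose (r + 1) * r ! /
          (ascPochhammer ℝ (r + 1)).eval (((n - (r + 1) : ℕ) : ℝ) + 2 * s)) * hsign

theorem stmt_4 (n k : ℕ) (hn : 1 ≤ n) (hk1 : 1 ≤ k) (hkn : k ≤ n) (s : ℝ) (hs : 0 < s) :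
    ∑ j ∈ Finset.range (k + 1),
        (-1 : ℝ) ^ (k - j) * (n.choose j : ℝ) * ((n - j).choose (k - j) : ℝ) * hShift s (n - j)
      = -phiRate s k n :=
  stmt_4_general n k hk1 hkn s hs
end

section
/- For integers q ≥ p ≥ 0 and real ρ ∈ (0,1) [sufficient for convergence], with β = ρ/(1+ρ), Σ_{n=p}^∞ Σ_{m=0}^q [(−1)^{n−p}/((q−m)!(n−p)!)] · (q!·n!/(p!·m!)) · ρ^{n−m}/(n−m) · 1_{n>m} equals −Σ_{k=1}^∞ β^k/k = log(1−β) if p = q, and 0 if q > p. -/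
/-!
The factorial coefficient is `C(q, m) · C(p + j, p)`. Indexing by the exponent `k = p + j - m`
of `ρ` instead of by `j`, the double series becomes
`∑_{k ≥ 1} ρ^k / k · ∑_{m ≤ q} (-1)^(k+m-p) C(q, m) C(k + m, p)`. Up to the sign `(-1)^(k+q-p)`
the inner sum is the `q`-th forward difference of `x ↦ C(x, p)` at `k`, which is `1` if `q = p`
and `0` if `q > p`. What remains is `∑_{k ≥ 1} (-ρ)^k / k = -log (1 + ρ) = log (1 - β)`.
-/

open Finset fwdDiff

lemma fwdDiff_iter_choose_of_le {p q : ℕ} (hpq : p ≤ q) (k : ℕ) :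
    Δ_[1] ^[q] (fun x ↦ x.choose p : ℕ → ℤ) k = if p = q then 1 else 0 := by
  obtain ⟨d, rfl⟩ := Nat.exists_eq_add_of_le hpq
  have hp := fwdDiff_iter_choose 0 p
  rw [add_zero] at hp
  rw [add_comm p d, Function.iterate_add_apply, hp]
  rcases d with _ | d
  · simp
  · simp only [Nat.choose_zero_right, Nat.cast_one]
    rw [Function.iterate_succ_apply, fwdDiff_const, if_neg (by omega)]
    exact congrFun (Function.iterate_fixed (fwdDiff_const 1 (0 : ℤ)) d) k

lemma sum_neg_one_pow_mul_choose_mul_choose_add {p q : ℕ} (hpq : p ≤ q) (k : ℕ) :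
    ∑ m ∈ range (q + 1), (-1 : ℤ) ^ (k + m - p) * q.choose m * (k + m).choose p
      = if p = q then (-1) ^ k else 0 := by
  have hdiff := fwdDiff_iter_choose_of_le hpq k
  rw [fwdDiff_iter_eq_sum_shift] at hdiff
  have hsign : ∀ m ∈ range (q + 1), (-1 : ℤ) ^ (k + m - p) * q.choose m * (k + m).choose p
      = (-1) ^ (k + q - p) * (((-1 : ℤ) ^ (q - m) * q.choose m) • ((k + m • 1).choose p : ℤ)) := by
    intro m hm
    have hmq : m ≤ q := mem_range_succ_iff.mp hm
    rcases lt_or_ge (k + m) p with hlt | hge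
    · simp [Nat.choose_eq_zero_of_lt hlt]
    · have hsq : ((-1 : ℤ) ^ (q - m)) ^ 2 = 1 := by rw [← pow_mul, pow_mul', neg_one_sq, one_pow]
      rw [show k + q - p = (k + m - p) + (q - m) by omega, pow_add, smul_eq_mul, smul_eq_mul,
        mul_one]
      linear_combination (-(-1 : ℤ) ^ (k + m - p) * q.choose m * (k + m).choose p) * hsq
  rw [sum_congr rfl hsign, ← mul_sum, hdiff]
  split_ifs with h
  · subst h
    simp
  · simp

lemma summable_choose_add_mul_pow (p m : ℕ) {r : ℝ} (hr0 : r ≠ 0) (hr : |r| < 1) :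
    Summable (fun k : ℕ ↦ ((k + m).choose p : ℝ) * r ^ k) := by
  have hbase : Summable (fun n : ℕ ↦ (n.choose p : ℝ) * r ^ n) := by
    refine .of_norm_bounded (summable_pow_mul_geometric_of_norm_lt_one p (r := |r|) (by simpa))
      fun n ↦ ?_
    rw [norm_mul, norm_pow, Real.norm_eq_abs, Real.norm_eq_abs, Nat.abs_cast]
    gcongr
    exact_mod_cast Nat.choose_le_pow n p
  refine (((summable_nat_add_iff m).2 hbase).mul_left (r ^ m)⁻¹).congr fun k ↦ ?_
  rw [pow_add]
  field_simp

lemma summable_neg_one_pow_mul_choose_add_mul_pow_div (p m : ℕ) {ρ : ℝ} (hρ0 : ρ ≠ 0)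
    (hρ : |ρ| < 1) :
    Summable (fun k : ℕ ↦ (-1) ^ (k + m - p) * ((k + m).choose p : ℝ) * ρ ^ k / k) := by
  refine .of_norm_bounded
    (summable_choose_add_mul_pow p m (abs_ne_zero.mpr hρ0) (by rwa [abs_abs])) fun k ↦ ?_
  rcases k.eq_zero_or_pos with rfl | hk
  · simp
  · simp only [norm_div, norm_mul, norm_pow, norm_neg, norm_one, one_pow, one_mul,
      Real.norm_eq_abs, Nat.abs_cast]
    exact div_le_self (by positivity) (by exact_mod_cast hk)

lemma hasSum_choose_mul_pow_div_iff (p m : ℕ) (ρ a : ℝ) :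
    HasSum (fun j : ℕ ↦
        (-1) ^ j * ((p + j).choose p : ℝ) * ρ ^ (p + j - m) / ((p + j - m : ℕ) : ℝ)) a ↔
      HasSum (fun k : ℕ ↦ (-1) ^ (k + m - p) * ((k + m).choose p : ℝ) * ρ ^ k / k) a := by
  -- `f n = 0` for `n < p` (the binomial vanishes) and for `n ≤ m` (division by `n - m = 0` in `ℕ`)
  set f : ℕ → ℝ := fun n ↦ (-1) ^ (n - p) * (n.choose p : ℝ) * ρ ^ (n - m) / ((n - m : ℕ) : ℝ)
  have hleft : HasSum (f ∘ (p + ·)) a ↔ HasSum f a :=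
    (add_right_injective p).hasSum_iff fun n hn ↦ by
      have : n < p := by
        by_contra h
        exact hn ⟨n - p, by simp only; omega⟩
      simp [f, Nat.choose_eq_zero_of_lt this]
  have hright : HasSum (f ∘ (· + m)) a ↔ HasSum f a :=
    (add_left_injective m).hasSum_iff fun n hn ↦ by
      have : n - m = 0 := by
        by_contra h
        exact hn ⟨n - m, by simp only; omega⟩
      simp [f, this]
  convert hleft.trans hright.symm using 2 <;> ext <;> simp [f]

lemma sum_choose_mul_neg_one_pow_mul_choose_add_mul_pow_div {p q : ℕ} (hpq : p ≤ q) (ρ : ℝ)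
    (k : ℕ) :
    ∑ m ∈ range (q + 1),
        (q.choose m : ℝ) * ((-1) ^ (k + m - p) * ((k + m).choose p : ℝ) * ρ ^ k / k)
      = if p = q then (-ρ) ^ k / k else 0 := by
  have hcomb := congrArg (Int.cast : ℤ → ℝ) (sum_neg_one_pow_mul_choose_mul_choose_add hpq k)
  push_cast at hcomb
  calc _ = (∑ m ∈ range (q + 1), (-1) ^ (k + m - p) * (q.choose m : ℝ) * (k + m).choose p)
          * (ρ ^ k / k) := by
        rw [sum_mul]
        exact sum_congr rfl fun m _ ↦ by ring
    _ = _ := by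
        rw [hcomb]
        split_ifs
        · rw [neg_pow]
          ring
        · rw [zero_mul]

lemma hasSum_pow_div_natCast {x : ℝ} (h : |x| < 1) :
    HasSum (fun k : ℕ ↦ x ^ k / k) (-Real.log (1 - x)) :=
  (hasSum_nat_add_iff' 1).1 (by simpa using Real.hasSum_pow_div_log_of_abs_lt_one h)

-- For `m ≥ p + j` the difference `p + j - m` is `0` in `ℕ`, so the indicator is redundant.
lemma summand_eq_choose_mul {p q j m : ℕ} (hm : m ≤ q) (ρ : ℝ) :
    (if m < p + j then
          ((-1 : ℝ) ^ j / (((q - m).factorial : ℝ) * (j.factorial : ℝ))) *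
            ((q.factorial : ℝ) * ((p + j).factorial : ℝ) /
              ((p.factorial : ℝ) * (m.factorial : ℝ))) *
            ρ ^ (p + j - m) / ((p + j - m : ℕ) : ℝ)
        else 0)
      = q.choose m *
          ((-1) ^ j * ((p + j).choose p : ℝ) * ρ ^ (p + j - m) / ((p + j - m : ℕ) : ℝ)) := by
  split_ifs with h
  · rw [Nat.cast_choose ℝ hm, Nat.cast_choose ℝ (Nat.le_add_right p j), Nat.add_sub_cancel_left]
    field_simp
  · simp [show p + j - m = 0 by omega]

theorem stmt_7 (p q : ℕ) (hpq : p ≤ q) (ρ : ℝ) (hρ0 : 0 < ρ) (hρ1 : ρ < 1)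
    (β : ℝ) (hβ : β = ρ / (1 + ρ)) :
    (∑' j : ℕ, ∑ m ∈ Finset.range (q + 1),
        (if m < p + j then
          ((-1 : ℝ) ^ j / (((q - m).factorial : ℝ) * (j.factorial : ℝ))) *
            ((q.factorial : ℝ) * ((p + j).factorial : ℝ) /
              ((p.factorial : ℝ) * (m.factorial : ℝ))) *
            ρ ^ (p + j - m) / ((p + j - m : ℕ) : ℝ)
        else 0))
      = if p = q then Real.log (1 - β) else 0 := by
  have hρ : |ρ| < 1 := by rwa [abs_of_pos hρ0]
  have hG := fun m ↦ summable_neg_one_pow_mul_choose_add_mul_pow_div p m hρ0.ne' hρ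
  rw [tsum_congr fun j ↦ sum_congr rfl fun m hm ↦
    summand_eq_choose_mul (mem_range_succ_iff.mp hm) ρ]
  have hcol := fun m (_ : m ∈ range (q + 1)) ↦
    ((hasSum_choose_mul_pow_div_iff p m ρ _).2 (hG m).hasSum).mul_left (q.choose m : ℝ)
  rw [(hasSum_sum hcol).tsum_eq]
  simp_rw [← (hG _).tsum_mul_left]
  rw [← Summable.tsum_finsetSum fun m _ ↦ (hG m).mul_left _,
    tsum_congr (sum_choose_mul_neg_one_pow_mul_choose_add_mul_pow_div hpq ρ)]
  split_ifs
  · have hβ_inv : 1 - β = (1 - -ρ)⁻¹ := by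
      rw [hβ, sub_neg_eq_add, one_sub_div (by positivity), add_sub_cancel_right, one_div]
    rw [(hasSum_pow_div_natCast (by rwa [abs_neg])).tsum_eq, hβ_inv, Real.log_inv]
  · exact tsum_zero
end

section
/- Let N ≥ 1 be an integer, s > 0 real, and (m_1,…,m_N) nonnegative integers with |m| = Σ m_i ≥ 1. Then |m|·(2sN − 1 + |m|) = Σ_{p=1}^N m_p · (m_p − 1 + 2s(N−p+1) + 2·Σ_{j=p+1}^N m_j) · Π_{i=1}^{p−1} [(1 − 2s(N−i+1) − Σ_{j=i+1}^N m_j)/(1 − 2s(N−i) − Σ_{j=i+1}^N m_j)], assuming all the denominators 1 − 2s(N−i) − Σ_{j=i+1}^N m_j are nonzero. -/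
/-!
Write `S p = ∑_{j > p} m_j` for the tails, `D p = 1 - 2s(N - p) - S p` for the denominators and
`Q p = ∏_{i ≤ p} (D i - 2s) / D i` for the partial products; the numerator of the `i`-th factor
is exactly `D i - 2s`. Since `D (p + 1) = D p + 2s + m_{p+1}`, the `p`-th summand equals
`S p D p Q p - S (p-1) D (p-1) Q (p-1)`, so the sum telescopes to `S N D N Q N - S 0 D 0 = M (2sN - 1 + M)`,
because `S N = 0` and `S 0 = M`.
-/

open Finset

theorem sum_Icc_eq_add_sum_Icc_succ {M : Type*} [AddCommMonoid M] (f : ℕ → M) {a b : ℕ}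
    (h : a ≤ b) : ∑ j ∈ Icc a b, f j = f a + ∑ j ∈ Icc (a + 1) b, f j := by
  rw [← add_sum_Ioc_eq_sum_Icc h, Icc_add_one_left_eq_Ioc]

theorem sum_Icc_one_eq_sum_range {M : Type*} [AddCommMonoid M] (f : ℕ → M) (n : ℕ) :
    ∑ p ∈ Icc 1 n, f p = ∑ k ∈ range n, f (k + 1) := by
  rw [range_eq_Ico, sum_Ico_add' f, zero_add, Ico_add_one_right_eq_Icc]

theorem sum_range_mul_eq_sub_of_step {R : Type*} [CommRing R] (S D Q : ℕ → R) (t : R) (n : ℕ)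
    (hD : ∀ p, D (p + 1) = D p + t + (S p - S (p + 1)))
    (hQ : ∀ p < n, Q (p + 1) * D (p + 1) = Q p * (D (p + 1) - t)) :
    ∑ p ∈ range n, (S p - S (p + 1)) * (S (p + 1) - D p) * Q p
      = S n * D n * Q n - S 0 * D 0 * Q 0 := by
  rw [← sum_range_sub fun p => S p * D p * Q p]
  refine sum_congr rfl fun p hp => ?_
  linear_combination -S (p + 1) * Q p * hD p - S (p + 1) * hQ p (mem_range.1 hp)

theorem stmt_9_general (N : ℕ) (s : ℝ) (m : ℕ → ℕ)
    (M : ℕ) (hM : M = ∑ i ∈ Finset.Icc 1 N, m i)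
    (hden : ∀ i ∈ Finset.Icc 1 (N - 1),
      (1 : ℝ) - 2 * s * ((N : ℝ) - (i : ℝ)) - ∑ j ∈ Finset.Icc (i + 1) N, (m j : ℝ) ≠ 0) :
    (M : ℝ) * (2 * s * (N : ℝ) - 1 + (M : ℝ))
      = ∑ p ∈ Finset.Icc 1 N,
          (m p : ℝ) *
            ((m p : ℝ) - 1 + 2 * s * ((N : ℝ) - (p : ℝ) + 1) +
              2 * ∑ j ∈ Finset.Icc (p + 1) N, (m j : ℝ)) *
            ∏ i ∈ Finset.Icc 1 (p - 1),
              ((1 - 2 * s * ((N : ℝ) - (i : ℝ) + 1) - ∑ j ∈ Finset.Icc (i + 1) N, (m j : ℝ)) /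
                (1 - 2 * s * ((N : ℝ) - (i : ℝ)) - ∑ j ∈ Finset.Icc (i + 1) N, (m j : ℝ))) := by
  set S : ℕ → ℝ := fun p => ∑ j ∈ Icc (p + 1) N, (m j : ℝ) with hS
  set D : ℕ → ℝ := fun p => 1 - 2 * s * ((N : ℝ) - p) - S p with hD
  set Q : ℕ → ℝ := fun p => ∏ i ∈ Icc 1 p, (D i - 2 * s) / D i with hQ
  have hS_succ : ∀ k < N, S k = m (k + 1) + S (k + 1) := fun k hk =>
    sum_Icc_eq_add_sum_Icc_succ _ hk
  have hS_top : S N = 0 := by simp [hS]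
  have hS_zero : S 0 = M := by simp [hS, hM]
  have hQ_zero : Q 0 = 1 := by simp [hQ]
  have hD_ne : ∀ i ∈ Icc 1 N, D i ≠ 0 := by
    intro i hi
    rcases (mem_Icc.1 hi).2.lt_or_eq with hlt | rfl
    · exact hden i (mem_Icc.2 ⟨(mem_Icc.1 hi).1, by omega⟩)
    · simp [hD, hS_top]
  have hD_step : ∀ p, D (p + 1) = D p + 2 * s + (S p - S (p + 1)) := fun p => by
    simp only [hD]; push_cast; ring
  have hQ_step : ∀ p < N, Q (p + 1) * D (p + 1) = Q p * (D (p + 1) - 2 * s) := by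
    intro p hp
    have hDp := hD_ne (p + 1) (mem_Icc.2 ⟨by omega, hp⟩)
    simp only [hQ]
    rw [prod_Icc_succ_top (by omega), mul_assoc, div_mul_cancel₀ _ hDp]
  rw [sum_Icc_one_eq_sum_range]
  calc (M : ℝ) * (2 * s * N - 1 + M) = S N * D N * Q N - S 0 * D 0 * Q 0 := by
        simp only [hS_top, hS_zero, hQ_zero, hD, Nat.cast_zero]
        ring
    _ = ∑ k ∈ range N, (S k - S (k + 1)) * (S (k + 1) - D k) * Q k :=
        (sum_range_mul_eq_sub_of_step S D Q (2 * s) N hD_step hQ_step).symm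
    _ = _ := by
      refine sum_congr rfl fun k hk => ?_
      have hm : (m (k + 1) : ℝ) = S k - S (k + 1) := by linarith [hS_succ k (mem_range.1 hk)]
      rw [hm, Nat.add_sub_cancel]
      congr 1
      · simp only [hD]; push_cast; ring
      · exact prod_congr rfl fun i _ => by simp only [hD, hS]; congr 1; ring

theorem stmt_9 (N : ℕ) (hN : 1 ≤ N) (s : ℝ) (hs : 0 < s) (m : ℕ → ℕ)
    (M : ℕ) (hM : M = ∑ i ∈ Finset.Icc 1 N, m i) (hM1 : 1 ≤ M)
    (hden : ∀ i ∈ Finset.Icc 1 (N - 1),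
      (1 : ℝ) - 2 * s * ((N : ℝ) - (i : ℝ)) - ∑ j ∈ Finset.Icc (i + 1) N, (m j : ℝ) ≠ 0) :
    (M : ℝ) * (2 * s * (N : ℝ) - 1 + (M : ℝ))
      = ∑ p ∈ Finset.Icc 1 N,
          (m p : ℝ) *
            ((m p : ℝ) - 1 + 2 * s * ((N : ℝ) - (p : ℝ) + 1) +
              2 * ∑ j ∈ Finset.Icc (p + 1) N, (m j : ℝ)) *
            ∏ i ∈ Finset.Icc 1 (p - 1),
              ((1 - 2 * s * ((N : ℝ) - (i : ℝ) + 1) - ∑ j ∈ Finset.Icc (i + 1) N, (m j : ℝ)) /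
                (1 - 2 * s * ((N : ℝ) - (i : ℝ)) - ∑ j ∈ Finset.Icc (i + 1) N, (m j : ℝ))) :=
  stmt_9_general N s m M hM hden
end

section
/- Let s > 0, N ≥ 3 be an integer, and w_3, …, w_{N−1} nonzero real numbers. Define f_k = 2s(2s(N−k+1) − 1). Then f_3 = Σ_{k=3}^{N−1} [4s²(w_k + 2s(N−k) − 1)/w_k] · Π_{j=3}^{k−1} (w_j − 2s)/w_j + f_N · Π_{j=3}^{N−1} (w_j − 2s)/w_j. -/
/-!
With `c j = (w j - 2 s) / w j`, the `k`-th summand is `(f k - f (k + 1) * c k) * ∏_{3 ≤ j < k} c j`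
because `f k - f (k + 1) = 4 s²`. Such a sum telescopes: it equals `g 3 - g N` for
`g k = f k * ∏_{3 ≤ j < k} c j`.
-/

open Finset

theorem Finset.sum_Ico_sub_mul_mul_prod {R : Type*} [CommRing R] (f c : ℕ → R) {a b : ℕ}
    (hab : a ≤ b) :
    ∑ k ∈ Ico a b, (f k - f (k + 1) * c k) * ∏ j ∈ Ico a k, c j
      = f a - f b * ∏ j ∈ Ico a b, c j := by
  set g : ℕ → R := fun k => f k * ∏ j ∈ Ico a k, c j
  have hterm : ∀ k ∈ Ico a b, (f k - f (k + 1) * c k) * ∏ j ∈ Ico a k, c j = -(g (k + 1) - g k) := by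
    intro k hk
    simp only [g, prod_Ico_succ_top (mem_Ico.mp hk).1]
    ring
  rw [sum_congr rfl hterm, sum_neg_distrib, sum_Ico_sub g hab]
  simp [g]

lemma Nat.Icc_sub_one_right_eq_Ico {a : ℕ} (ha : 0 < a) (b : ℕ) : Icc a (b - 1) = Ico a b := by
  ext k
  simp only [mem_Icc, mem_Ico]
  omega

theorem stmt_10_general (s : ℝ) (N : ℕ) (hN : 3 ≤ N) (w : ℕ → ℝ)
    (hw : ∀ j ∈ Finset.Icc 3 (N - 1), w j ≠ 0)
    (f : ℕ → ℝ) (hf : ∀ k, f k = 2 * s * (2 * s * ((N : ℝ) - (k : ℝ) + 1) - 1)) :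
    f 3 = (∑ k ∈ Finset.Icc 3 (N - 1),
        (4 * s ^ 2 * (w k + 2 * s * ((N : ℝ) - (k : ℝ)) - 1) / w k) *
          ∏ j ∈ Finset.Icc 3 (k - 1), (w j - 2 * s) / w j)
      + f N * ∏ j ∈ Finset.Icc 3 (N - 1), (w j - 2 * s) / w j := by
  have hcoeff : ∀ k ∈ Icc 3 (N - 1), 4 * s ^ 2 * (w k + 2 * s * ((N : ℝ) - (k : ℝ)) - 1) / w k
      = f k - f (k + 1) * ((w k - 2 * s) / w k) := by
    intro k hk
    rw [hf, hf]
    field_simp [hw k hk]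
    push_cast
    ring
  rw [sum_congr rfl fun k hk => by rw [hcoeff k hk]]
  simp only [Nat.Icc_sub_one_right_eq_Ico (by norm_num : 0 < 3)]
  rw [sum_Ico_sub_mul_mul_prod f _ (by omega : 3 ≤ N), sub_add_cancel]

theorem stmt_10 (s : ℝ) (hs : 0 < s) (N : ℕ) (hN : 3 ≤ N) (w : ℕ → ℝ)
    (hw : ∀ j ∈ Finset.Icc 3 (N - 1), w j ≠ 0)
    (f : ℕ → ℝ) (hf : ∀ k, f k = 2 * s * (2 * s * ((N : ℝ) - (k : ℝ) + 1) - 1)) :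
    f 3 = (∑ k ∈ Finset.Icc 3 (N - 1),
        (4 * s ^ 2 * (w k + 2 * s * ((N : ℝ) - (k : ℝ)) - 1) / w k) *
          ∏ j ∈ Finset.Icc 3 (k - 1), (w j - 2 * s) / w j)
      + f N * ∏ j ∈ Finset.Icc 3 (N - 1), (w j - 2 * s) / w j :=
  stmt_10_general s N hN w hw f hf
end

section
/- Let s > 0, N ≥ 1, and let ξ ∈ ℕ^N with |ξ| = Σ ξ_i ≥ 0. Fix u ∈ (0,1). For 0 ≤ n ≤ |ξ|, let x_1 ≤ … ≤ x_{|ξ|} ≤ N be the positions corresponding to ξ, and define g_N(n) = Σ_{1 ≤ i_1 < … < i_n ≤ |ξ|} Π_{α=1}^n [(n − α + 2s(N + 1 − (x_{i_α} + ⌊uN⌋)))/(n − α + 2s(N+1))], the value obtained after translating all positions by ⌊uN⌋. Then g_N(n) → C(|ξ|, n)·(1−u)^n as N → ∞. -/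
open Finset Filter

/-! Each factor of the product tends to `1 - u`: its numerator and denominator grow linearly
in `N`, with slopes `2 s (1 - u)` and `2 s`, because `⌊u N⌋ / N → u`. The sum has `C(M, n)`
terms, each a product of `n` such factors. -/

lemma tendsto_div_of_tendsto_div_natCast {f g : ℕ → ℝ} {c d : ℝ}
    (hf : Tendsto (fun N : ℕ => f N / N) atTop (nhds c))
    (hg : Tendsto (fun N : ℕ => g N / N) atTop (nhds d)) (hd : d ≠ 0) :
    Tendsto (fun N : ℕ => f N / g N) atTop (nhds (c / d)) := by
  refine (hf.div hg hd).congr' ?_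
  filter_upwards [eventually_ne_atTop 0] with N hN
  exact div_div_div_cancel_right₀ (Nat.cast_ne_zero.mpr hN) _ _

lemma tendsto_affine_div_natCast (a b : ℝ) :
    Tendsto (fun N : ℕ => (a + b * N) / N) atTop (nhds b) := by
  have h := (tendsto_const_nhds (x := a)).mul tendsto_inv_atTop_nhds_zero_nat
    |>.add (tendsto_const_nhds (x := b))
  rw [mul_zero, zero_add] at h
  refine h.congr' ?_
  filter_upwards [eventually_ne_atTop 0] with N hN
  field_simp

lemma tendsto_shifted_ratio {s u : ℝ} (hs : s ≠ 0) (hu : 0 ≤ u) (a b : ℝ) :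
    Tendsto (fun N : ℕ => (a + 2 * s * ((N : ℝ) + 1 - (b + (Nat.floor (u * N) : ℝ)))) /
      (a + 2 * s * ((N : ℝ) + 1))) atTop (nhds (1 - u)) := by
  have hfloor : Tendsto (fun N : ℕ => (Nat.floor (u * N) : ℝ) / N) atTop (nhds u) :=
    (tendsto_nat_floor_mul_div_atTop hu).comp tendsto_natCast_atTop_atTop
  have hnum : Tendsto
      (fun N : ℕ => (a + 2 * s * ((N : ℝ) + 1 - (b + (Nat.floor (u * N) : ℝ)))) / N)
      atTop (nhds (2 * s - 2 * s * u)) := by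
    refine ((tendsto_affine_div_natCast (a + 2 * s * (1 - b)) (2 * s)).sub
      (hfloor.const_mul (2 * s))).congr' ?_
    filter_upwards [eventually_ne_atTop 0] with N hN
    field_simp
    ring
  have hden : Tendsto (fun N : ℕ => (a + 2 * s * ((N : ℝ) + 1)) / N) atTop (nhds (2 * s)) :=
    (tendsto_affine_div_natCast (a + 2 * s) (2 * s)).congr fun N => by ring
  have h2s : 2 * s ≠ 0 := mul_ne_zero two_ne_zero hs
  convert tendsto_div_of_tendsto_div_natCast hnum hden h2s using 2
  field_simp

theorem stmt_13_general (s : ℝ) (hs : 0 < s) (u : ℝ) (hu0 : 0 < u)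
    (M : ℕ) (x : ℕ → ℕ)
    (n : ℕ) :
    Tendsto (fun N : ℕ =>
        ∑ T ∈ (Finset.Icc 1 M).powersetCard n,
          ∏ α ∈ Finset.range n,
            ((n : ℝ) - ((α : ℝ) + 1) +
                2 * s * ((N : ℝ) + 1 -
                  ((x ((T.sort (· ≤ ·)).getD α 0) : ℝ) + (Nat.floor (u * N) : ℝ)))) /
              ((n : ℝ) - ((α : ℝ) + 1) + 2 * s * ((N : ℝ) + 1)))
      atTop (nhds ((M.choose n : ℝ) * (1 - u) ^ n)) := by
  have hlimit : (M.choose n : ℝ) * (1 - u) ^ n =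
      ∑ T ∈ (Finset.Icc 1 M).powersetCard n, ∏ _α ∈ Finset.range n, (1 - u) := by
    simp [Finset.card_powersetCard]
  rw [hlimit]
  exact tendsto_finsetSum _ fun T _ => tendsto_finsetProd _ fun α _ =>
    tendsto_shifted_ratio hs.ne' hu0.le _ _

theorem stmt_13 (s : ℝ) (hs : 0 < s) (u : ℝ) (hu0 : 0 < u) (hu1 : u < 1)
    (M : ℕ) (x : ℕ → ℕ) (hx : ∀ i ∈ Finset.Icc 1 M, 1 ≤ x i)
    (hmono : ∀ i ∈ Finset.Icc 1 M, ∀ j ∈ Finset.Icc 1 M, i ≤ j → x i ≤ x j)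
    (n : ℕ) (hn : n ≤ M) :
    Tendsto (fun N : ℕ =>
        ∑ T ∈ (Finset.Icc 1 M).powersetCard n,
          ∏ α ∈ Finset.range n,
            ((n : ℝ) - ((α : ℝ) + 1) +
                2 * s * ((N : ℝ) + 1 -
                  ((x ((T.sort (· ≤ ·)).getD α 0) : ℝ) + (Nat.floor (u * N) : ℝ)))) /
              ((n : ℝ) - ((α : ℝ) + 1) + 2 * s * ((N : ℝ) + 1)))
      atTop (nhds ((M.choose n : ℝ) * (1 - u) ^ n)) :=
  stmt_13_general s hs u hu0 M x n
end
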